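/- arXiv:1503.03801 — 3 statements merged into one kernel-verified Lean document; each statement's English description precedes it below -/
import Mathlib

section
/- Let E = ⋃_{i=1}^N [α_i, β_i] be a disjoint union of N ≥ 2 nondegenerate closed intervals. Then there exists a unique vector (ζ_1,…,ζ_{N−1}) with ζ_i ∈ (β_i, α_{i+1}) for each i, such that for every i = 1,…,N−1 one has ∫_{β_i}^{α_{i+1}} Z(s)/√|Y(s)| ds = 0, where Y(z) = ∏_{i=1}^N (z − α_i)(z − β_i) and Z(z) = ∏_{i=1}^{N−1} (z − ζ_i). -/
open Set MeasureTheory intervalIntegral Polynomial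

lemma inv_sqrt_eq_rpow (x : ℝ) : (Real.sqrt x)⁻¹ = x ^ (-(2⁻¹) : ℝ) := by
  rcases le_or_gt 0 x with h | h
  · rw [Real.sqrt_eq_rpow, ← Real.rpow_neg h]; norm_num
  · rw [Real.sqrt_eq_zero_of_nonpos h.le, Real.rpow_def_of_neg h]
    norm_num [mul_comm]
    rw [mul_one_div]
    exact Real.cos_pi_div_two

lemma ii_left (a b : ℝ) : IntervalIntegrable (fun s => (Real.sqrt (s - a))⁻¹) volume a b := by
  have h : IntervalIntegrable (fun x : ℝ => x ^ (-(2⁻¹) : ℝ)) volume 0 (b - a) :=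
    intervalIntegral.intervalIntegrable_rpow' (by norm_num)
  have := h.comp_sub_right a
  simp only [zero_add] at this
  simpa [inv_sqrt_eq_rpow, sub_add_cancel] using this

lemma ii_right (a b : ℝ) : IntervalIntegrable (fun s => (Real.sqrt (b - s))⁻¹) volume a b := by
  have h : IntervalIntegrable (fun x : ℝ => x ^ (-(2⁻¹) : ℝ)) volume 0 (b - a) :=
    intervalIntegral.intervalIntegrable_rpow' (by norm_num)
  have := h.comp_sub_left b
  simp only [sub_zero, sub_sub_cancel] at this
  simpa [inv_sqrt_eq_rpow] using this.symm

lemma inv_sqrt_mul_le {u v d : ℝ} (hu : 0 < u) (hv : 0 < v) (huv : u + v = d) :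
    (Real.sqrt u)⁻¹ * (Real.sqrt v)⁻¹
      ≤ Real.sqrt (2 / d) * ((Real.sqrt u)⁻¹ + (Real.sqrt v)⁻¹) := by
  have hd : 0 < d := by linarith
  have key : ∀ w z : ℝ, 0 < w → 0 < z → w + z = d → z ≥ d / 2 →
      (Real.sqrt w)⁻¹ * (Real.sqrt z)⁻¹
        ≤ Real.sqrt (2 / d) * ((Real.sqrt w)⁻¹ + (Real.sqrt z)⁻¹) := by
    intro w z hw hz hwz hz2
    have h1 : (Real.sqrt z)⁻¹ ≤ Real.sqrt (2 / d) := by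
      rw [← Real.sqrt_inv]
      apply Real.sqrt_le_sqrt
      have : z⁻¹ ≤ (d / 2)⁻¹ := inv_anti₀ (by linarith) hz2
      rwa [inv_div] at this
    have k2 : (0:ℝ) ≤ (Real.sqrt w)⁻¹ := by positivity
    have k3 : (0:ℝ) ≤ (Real.sqrt z)⁻¹ := by positivity
    have k4 : (0:ℝ) ≤ Real.sqrt (2 / d) := Real.sqrt_nonneg _
    nlinarith [mul_le_mul_of_nonneg_left h1 k2, mul_nonneg k4 k3]
  rcases le_total u v with h | h
  · exact key u v hu hv huv (by linarith)
  · have := key v u hv hu (by linarith) (by linarith)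
    calc (Real.sqrt u)⁻¹ * (Real.sqrt v)⁻¹ = (Real.sqrt v)⁻¹ * (Real.sqrt u)⁻¹ := by ring
    _ ≤ Real.sqrt (2 / d) * ((Real.sqrt v)⁻¹ + (Real.sqrt u)⁻¹) := this
    _ = Real.sqrt (2 / d) * ((Real.sqrt u)⁻¹ + (Real.sqrt v)⁻¹) := by ring

section aux
variable {N : ℕ} {α β : ℕ → ℝ}

lemma chain_lem (hab : ∀ i < N, α i < β i) (hba : ∀ i, i + 1 < N → β i < α (i + 1)) :
    ∀ j, j < N → ∀ i, i < j → β i < α j := by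
  intro j
  induction j with
  | zero => omega
  | succ j ih =>
    intro hj i hi
    rcases Nat.lt_succ_iff_lt_or_eq.mp hi with h | h
    · exact lt_trans (lt_trans (ih (by omega) i h) (hab j (by omega))) (hba j hj)
    · subst h; exact hba i hj

lemma gap_lt (hab : ∀ i < N, α i < β i) (hba : ∀ i, i + 1 < N → β i < α (i + 1))
    {i j : ℕ} (hij : i < j) (hj : j + 1 < N) {x y : ℝ}
    (hx : x ∈ Ioo (β i) (α (i + 1))) (hy : y ∈ Ioo (β j) (α (j + 1))) : x < y := by
  have hjN : j < N := by omega
  have h1 : α (i + 1) ≤ β j := by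
    rcases Nat.lt_or_ge (i + 1) j with h | h
    · have g1 : α (i + 1) < β (i + 1) := hab (i + 1) (by omega)
      have g2 : β (i + 1) < α j := by
        rcases Nat.lt_or_ge (i + 1 + 1) j with hh | hh
        · exact chain_lem hab hba j hjN (i + 1) h
        · exact chain_lem hab hba j hjN (i + 1) h
      have g3 : α j < β j := hab j hjN
      linarith
    · have : i + 1 = j := by omega
      subst this; exact le_of_lt (hab _ hjN)
  calc x < α (i + 1) := hx.2
    _ ≤ β j := h1
    _ < y := hy.1

lemma factor_lem (hab : ∀ i < N, α i < β i) (hba : ∀ i, i + 1 < N → β i < α (i + 1))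
    {i : ℕ} (hi : i + 1 < N) :
    ∃ R : ℝ → ℝ, Continuous R ∧
      (∀ s, (∏ m ∈ Finset.range N, ((s - α m) * (s - β m)))
        = (s - β i) * (α (i + 1) - s) * R s) ∧
      (∀ s ∈ Icc (β i) (α (i + 1)), 0 < R s) := by
  refine ⟨fun s => ((s - α i) * (β (i + 1) - s)) *
      ∏ m ∈ ((Finset.range N).erase i).erase (i + 1), ((s - α m) * (s - β m)), ?_, ?_, ?_⟩
  · continuity
  · intro s
    have h1 : i ∈ Finset.range N := Finset.mem_range.2 (by omega)
    have h2 : i + 1 ∈ (Finset.range N).erase i :=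
      Finset.mem_erase.2 ⟨by omega, Finset.mem_range.2 hi⟩
    rw [← Finset.mul_prod_erase _ _ h1, ← Finset.mul_prod_erase _ _ h2]
    ring
  · intro s hs
    have hchain := chain_lem hab hba
    have h1 : 0 < s - α i := by
      have := hab i (by omega)
      have := hs.1; linarith
    have h2 : 0 < β (i + 1) - s := by
      have := hab (i + 1) hi
      have := hs.2; linarith
    refine mul_pos (mul_pos h1 h2) (Finset.prod_pos ?_)
    intro m hm
    rcases Finset.mem_erase.1 hm with ⟨hm1, hm'⟩
    rcases Finset.mem_erase.1 hm' with ⟨hm2, hm3⟩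
    have hmN : m < N := Finset.mem_range.1 hm3
    rcases Nat.lt_or_ge m (i + 1) with h | h
    · have hmi : m < i := by omega
      have hbm : β m < β i := lt_trans (hchain i (by omega) m hmi) (hab i (by omega))
      have ham : α m < β i := lt_trans (hab m (by omega)) hbm
      have := hs.1
      exact mul_pos (by linarith) (by linarith)
    · have hmi : i + 1 < m := by omega
      have ham : α (i + 1) < α m := lt_trans (hab (i + 1) hi) (hchain m hmN (i + 1) hmi)
      have hbm : α (i + 1) < β m := lt_trans ham (hab m hmN)
      have := hs.2
      have hx : s - α m < 0 := by linarith
      have hy : s - β m < 0 := by linarith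
      exact mul_pos_of_neg_of_neg hx hy

lemma sqrt_abs_pos (hab : ∀ i < N, α i < β i) (hba : ∀ i, i + 1 < N → β i < α (i + 1))
    {i : ℕ} (hi : i + 1 < N) {s : ℝ} (hs : s ∈ Ioo (β i) (α (i + 1))) :
    0 < Real.sqrt |∏ m ∈ Finset.range N, ((s - α m) * (s - β m))| := by
  obtain ⟨R, _, hRe, hRpos⟩ := factor_lem hab hba hi
  rw [hRe s]
  have h1 : 0 < s - β i := by have := hs.1; linarith
  have h2 : 0 < α (i + 1) - s := by have := hs.2; linarith
  have h3 : 0 < R s := hRpos s ⟨hs.1.le, hs.2.le⟩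
  have : 0 < (s - β i) * (α (i + 1) - s) * R s := by positivity
  rw [abs_of_pos this]
  exact Real.sqrt_pos.2 this

lemma integrable_div_sqrt (hab : ∀ i < N, α i < β i) (hba : ∀ i, i + 1 < N → β i < α (i + 1))
    {i : ℕ} (hi : i + 1 < N) {f : ℝ → ℝ} (hf : Continuous f) :
    IntervalIntegrable
      (fun s => f s / Real.sqrt |∏ m ∈ Finset.range N, ((s - α m) * (s - β m))|)
      volume (β i) (α (i + 1)) := by
  obtain ⟨R, hRc, hRe, hRpos⟩ := factor_lem hab hba hi
  set a := β i with ha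
  set b := α (i + 1) with hb
  have hab' : a < b := hba i hi
  obtain ⟨x0, hx0, hmin⟩ :=
    isCompact_Icc.exists_isMinOn (nonempty_Icc.2 hab'.le) hRc.continuousOn
  set c := R x0 with hc
  have hcpos : 0 < c := hRpos x0 hx0
  obtain ⟨x1, hx1, hmax⟩ :=
    isCompact_Icc.exists_isMaxOn (nonempty_Icc.2 hab'.le) hf.abs.continuousOn
  set Mf := |f x1| with hMfdef
  have hMf : 0 ≤ Mf := abs_nonneg _
  set K := Real.sqrt (2 / (b - a)) with hK
  set Cst := Mf / Real.sqrt c * K with hC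
  have hCst : 0 ≤ Cst := by positivity
  set g : ℝ → ℝ := fun s => Cst * ((Real.sqrt (s - a))⁻¹ + (Real.sqrt (b - s))⁻¹) with hg
  have hgint : IntervalIntegrable g volume a b :=
    (((ii_left a b).add (ii_right a b)).const_mul Cst)
  rw [intervalIntegrable_iff_integrableOn_Ioo_of_le hab'.le]
  have hgOn : IntegrableOn g (Ioo a b) volume := by
    have := (intervalIntegrable_iff_integrableOn_Ioo_of_le hab'.le).1 hgint
    exact this
  apply Integrable.mono' hgOn
  · exact (hf.measurable.div
      ((continuous_abs.comp (by continuity : Continuous fun s : ℝ =>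
        ∏ m ∈ Finset.range N, ((s - α m) * (s - β m)))).sqrt.measurable)).aestronglyMeasurable
  · rw [ae_restrict_iff' measurableSet_Ioo]
    filter_upwards with s hs
    set u := s - a with hu
    set v := b - s with hv
    have hupos : 0 < u := by have := hs.1; simp only [hu]; linarith
    have hvpos : 0 < v := by have := hs.2; simp only [hv]; linarith
    have hRs : c ≤ R s := isMinOn_iff.1 hmin s ⟨hs.1.le, hs.2.le⟩
    have hfs : |f s| ≤ Mf := isMaxOn_iff.1 hmax s ⟨hs.1.le, hs.2.le⟩
    have hRspos : 0 < R s := hRpos s ⟨hs.1.le, hs.2.le⟩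
    have hYval : |∏ m ∈ Finset.range N, ((s - α m) * (s - β m))| = u * v * R s := by
      rw [hRe s, abs_of_pos (by positivity)]
    have hsc : 0 < Real.sqrt c := Real.sqrt_pos.2 hcpos
    have hsu : 0 < Real.sqrt u := Real.sqrt_pos.2 hupos
    have hsv : 0 < Real.sqrt v := Real.sqrt_pos.2 hvpos
    have hD : Real.sqrt u * Real.sqrt v * Real.sqrt c
        ≤ Real.sqrt |∏ m ∈ Finset.range N, ((s - α m) * (s - β m))| := by
      rw [hYval, Real.sqrt_mul (by positivity : (0:ℝ) ≤ u * v), Real.sqrt_mul hupos.le]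
      have hcc : Real.sqrt c ≤ Real.sqrt (R s) := Real.sqrt_le_sqrt hRs
      have := mul_le_mul_of_nonneg_left hcc (by positivity : (0:ℝ) ≤ Real.sqrt u * Real.sqrt v)
      linarith
    have hnorm : ‖f s / Real.sqrt |∏ m ∈ Finset.range N, ((s - α m) * (s - β m))|‖
        = |f s| / Real.sqrt |∏ m ∈ Finset.range N, ((s - α m) * (s - β m))| := by
      rw [Real.norm_eq_abs, abs_div, abs_of_nonneg (Real.sqrt_nonneg _)]
    have hDpos : 0 < Real.sqrt u * Real.sqrt v * Real.sqrt c := by positivity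
    have h1 : |f s| / Real.sqrt |∏ m ∈ Finset.range N, ((s - α m) * (s - β m))|
        ≤ Mf / (Real.sqrt u * Real.sqrt v * Real.sqrt c) :=
      div_le_div₀ hMf hfs hDpos hD
    have h2 : Mf / (Real.sqrt u * Real.sqrt v * Real.sqrt c)
        = Mf / Real.sqrt c * ((Real.sqrt u)⁻¹ * (Real.sqrt v)⁻¹) := by
      rw [div_eq_mul_inv, div_eq_mul_inv, mul_inv, mul_inv]
      ring
    have h3 := inv_sqrt_mul_le hupos hvpos (show u + v = b - a by rw [hu, hv]; ring)
    have h4 := mul_le_mul_of_nonneg_left h3 (by positivity : (0:ℝ) ≤ Mf / Real.sqrt c)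
    rw [hnorm]
    refine le_trans h1 ?_
    rw [h2]
    refine le_trans h4 ?_
    simp only [hg]
    rw [← hu, ← hv, hC, hK]
    exact le_of_eq (by ring)

lemma exists_root_in_gap (hab : ∀ i < N, α i < β i) (hba : ∀ i, i + 1 < N → β i < α (i + 1))
    {i : ℕ} (hi : i + 1 < N) {f : ℝ → ℝ} (hf : Continuous f)
    (hzero : ∫ s in (β i)..(α (i + 1)),
      f s / Real.sqrt |∏ m ∈ Finset.range N, ((s - α m) * (s - β m))| = 0) :
    ∃ x ∈ Ioo (β i) (α (i + 1)), f x = 0 := by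
  by_contra hcon
  push_neg at hcon
  have hab' : β i < α (i + 1) := hba i hi
  have hsign : (∀ x ∈ Ioo (β i) (α (i + 1)), 0 < f x)
      ∨ (∀ x ∈ Ioo (β i) (α (i + 1)), f x < 0) := by
    by_contra h
    push_neg at h
    obtain ⟨⟨x, hx, hfx⟩, ⟨y, hy, hfy⟩⟩ := h
    have hfx' : f x < 0 := lt_of_le_of_ne hfx (hcon x hx)
    have hfy' : 0 < f y := lt_of_le_of_ne hfy (Ne.symm (hcon y hy))
    rcases le_total x y with hxy | hxy
    · have := intermediate_value_Icc hxy hf.continuousOn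
      have h0 : (0:ℝ) ∈ Icc (f x) (f y) := ⟨hfx'.le, hfy'.le⟩
      obtain ⟨z, hz, hz0⟩ := this h0
      have hzI : z ∈ Ioo (β i) (α (i + 1)) :=
        ⟨lt_of_lt_of_le hx.1 hz.1, lt_of_le_of_lt hz.2 hy.2⟩
      exact hcon z hzI hz0
    · have := intermediate_value_Icc' hxy hf.continuousOn
      have h0 : (0:ℝ) ∈ Icc (f x) (f y) := ⟨hfx'.le, hfy'.le⟩
      obtain ⟨z, hz, hz0⟩ := this h0
      have hzI : z ∈ Ioo (β i) (α (i + 1)) :=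
        ⟨lt_of_lt_of_le hy.1 hz.1, lt_of_le_of_lt hz.2 hx.2⟩
      exact hcon z hzI hz0
  have hint := integrable_div_sqrt hab hba hi hf
  rcases hsign with hpos | hneg
  · have : 0 < ∫ s in (β i)..(α (i + 1)),
        f s / Real.sqrt |∏ m ∈ Finset.range N, ((s - α m) * (s - β m))| := by
      apply intervalIntegral.intervalIntegral_pos_of_pos_on hint _ hab'
      intro x hx
      exact div_pos (hpos x hx) (sqrt_abs_pos hab hba hi hx)
    linarith [this, hzero.le]
  · have hneg' : 0 < ∫ s in (β i)..(α (i + 1)),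
        (-f) s / Real.sqrt |∏ m ∈ Finset.range N, ((s - α m) * (s - β m))| := by
      apply intervalIntegral.intervalIntegral_pos_of_pos_on
        (integrable_div_sqrt hab hba hi hf.neg) _ hab'
      intro x hx
      exact div_pos (by simpa using (hneg x hx)) (sqrt_abs_pos hab hba hi hx)
    have heq : ∫ s in (β i)..(α (i + 1)),
        (-f) s / Real.sqrt |∏ m ∈ Finset.range N, ((s - α m) * (s - β m))| = 0 := by
      have : (fun s => (-f) s / Real.sqrt |∏ m ∈ Finset.range N, ((s - α m) * (s - β m))|)
          = fun s => -(f s / Real.sqrt |∏ m ∈ Finset.range N, ((s - α m) * (s - β m))|) := by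
        funext s; simp [neg_div]
      rw [this, intervalIntegral.integral_neg, hzero, neg_zero]
    linarith
  
lemma card_le_natDegree (hab : ∀ i < N, α i < β i) (hba : ∀ i, i + 1 < N → β i < α (i + 1))
    {n : ℕ} (hn : ∀ i : Fin n, (i : ℕ) + 1 < N)
    {p : Polynomial ℝ} (hp : p ≠ 0) (r : Fin n → ℝ)
    (hr : ∀ i : Fin n, r i ∈ Ioo (β (i : ℕ)) (α ((i : ℕ) + 1)) ∧ p.IsRoot (r i)) :
    n ≤ p.natDegree := by
  have hmono : StrictMono r := fun i j hij =>
    gap_lt hab hba (show (i : ℕ) < (j : ℕ) from hij) (hn j) (hr i).1 (hr j).1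
  have hsub : Finset.image r Finset.univ ⊆ p.roots.toFinset := by
    intro x hx
    obtain ⟨i, _, rfl⟩ := Finset.mem_image.1 hx
    rw [Multiset.mem_toFinset, Polynomial.mem_roots hp]
    exact (hr i).2
  have hcard := Finset.card_le_card hsub
  rw [Finset.card_image_of_injective _ hmono.injective, Finset.card_univ,
    Fintype.card_fin] at hcard
  calc n ≤ p.roots.toFinset.card := hcard
  _ ≤ Multiset.card p.roots := p.roots.toFinset_card_le
  _ ≤ p.natDegree := p.card_roots'

lemma natDegree_ge (hab : ∀ i < N, α i < β i) (hba : ∀ i, i + 1 < N → β i < α (i + 1))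
    {n : ℕ} (hn : ∀ i : Fin n, (i : ℕ) + 1 < N) {p : Polynomial ℝ} (hp : p ≠ 0)
    (hz : ∀ i : Fin n, ∫ s in (β (i : ℕ))..(α ((i : ℕ) + 1)),
      p.eval s / Real.sqrt |∏ m ∈ Finset.range N, ((s - α m) * (s - β m))| = 0) :
    n ≤ p.natDegree := by
  have hroot : ∀ i : Fin n, ∃ x ∈ Ioo (β (i : ℕ)) (α ((i : ℕ) + 1)), p.eval x = 0 :=
    fun i => exists_root_in_gap hab hba (hn i) (p.continuous) (hz i)
  choose r hr1 hr2 using hroot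
  exact card_le_natDegree hab hba hn hp r (fun i => ⟨hr1 i, hr2 i⟩)

lemma natDegree_sub_lt_monic {p q : Polynomial ℝ} {n : ℕ} (hp : p.Monic) (hq : q.Monic)
    (hpn : p.natDegree = n) (hqn : q.natDegree = n) (hne : p ≠ q) :
    (p - q).natDegree < n := by
  have hne' : p - q ≠ 0 := sub_ne_zero.2 hne
  have hle : (p - q).natDegree ≤ n := by
    have := Polynomial.natDegree_sub_le p q
    omega
  rcases lt_or_eq_of_le hle with h | h
  · exact h
  · exfalso
    have hco : (p - q).coeff n = 0 := by
      rw [Polynomial.coeff_sub]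
      have h1 : p.coeff n = 1 := by rw [← hpn]; exact hp.coeff_natDegree
      have h2 : q.coeff n = 1 := by rw [← hqn]; exact hq.coeff_natDegree
      rw [h1, h2, sub_self]
    have hlc : (p - q).leadingCoeff = 0 := by
      rw [Polynomial.leadingCoeff, h, hco]
    exact hne' (Polynomial.leadingCoeff_eq_zero.1 hlc)

end aux

/-- Let `E = ⋃_{i<N} [α i, β i]` be a disjoint union of `N ≥ 2`
nondegenerate closed intervals (in increasing order). Then there exists a unique
vector `(ζ 0, …, ζ (N-2))` with `ζ i ∈ (β i, α (i+1))` for each `i`, such that for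
every `i` the integral over the `i`-th gap of `Z(s)/√|Y(s)|` vanishes, where
`Y(z) = ∏_{i<N} (z − α i)(z − β i)` and `Z(z) = ∏_{i<N-1} (z − ζ i)`. -/
theorem stmt_7 (N : ℕ) (hN : 2 ≤ N) (α β : ℕ → ℝ)
    (hab : ∀ i < N, α i < β i)
    (hba : ∀ i, i + 1 < N → β i < α (i + 1)) :
    ∃! ζ : Fin (N - 1) → ℝ,
      (∀ i : Fin (N - 1), ζ i ∈ Set.Ioo (β (i : ℕ)) (α ((i : ℕ) + 1))) ∧
      (∀ i : Fin (N - 1),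
        ∫ s in (β (i : ℕ))..(α ((i : ℕ) + 1)),
          (∏ j : Fin (N - 1), (s - ζ j)) /
            Real.sqrt |∏ m ∈ Finset.range N, ((s - α m) * (s - β m))| = 0) := by
  classical
  have hiN : ∀ i : Fin (N - 1), (i : ℕ) + 1 < N := fun i => by
    have := i.isLt; omega
  set W : ℝ → ℝ := fun s => Real.sqrt |∏ m ∈ Finset.range N, ((s - α m) * (s - β m))| with hW
  have hii : ∀ (i : Fin (N - 1)) (f : ℝ → ℝ), Continuous f →
      IntervalIntegrable (fun s => f s / W s) volume (β (i : ℕ)) (α ((i : ℕ) + 1)) :=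
    fun i f hf => integrable_div_sqrt hab hba (hiN i) hf
  -- the matrix of moments
  set M : Matrix (Fin (N - 1)) (Fin (N - 1)) ℝ :=
    fun i k => ∫ s in (β (i : ℕ))..(α ((i : ℕ) + 1)), s ^ (k : ℕ) / W s with hM
  have hmul : ∀ (c : Fin (N - 1) → ℝ) (i : Fin (N - 1)),
      M.mulVec c i = ∫ s in (β (i : ℕ))..(α ((i : ℕ) + 1)),
        (∑ k : Fin (N - 1), c k * s ^ (k : ℕ)) / W s := by
    intro c i
    have hterm : ∀ k : Fin (N - 1), M i k * c k
        = ∫ s in (β (i : ℕ))..(α ((i : ℕ) + 1)), c k * s ^ (k : ℕ) / W s := by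
      intro k
      rw [hM]
      rw [mul_comm, ← intervalIntegral.integral_const_mul]
      congr 1; funext s; ring
    have hsum : M.mulVec c i = ∑ k : Fin (N - 1),
        ∫ s in (β (i : ℕ))..(α ((i : ℕ) + 1)), c k * s ^ (k : ℕ) / W s := by
      rw [Matrix.mulVec, dotProduct]
      exact Finset.sum_congr rfl fun k _ => hterm k
    rw [hsum, ← intervalIntegral.integral_finset_sum]
    · congr 1; funext s; rw [Finset.sum_div]
    · intro k _
      exact hii i (fun s => c k * s ^ (k : ℕ)) (continuous_const.mul (continuous_pow _))
  -- coefficient vectors ↦ polynomials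
  have evalP : ∀ (c : Fin (N - 1) → ℝ) (s : ℝ),
      (∑ k : Fin (N - 1), Polynomial.C (c k) * Polynomial.X ^ (k : ℕ)).eval s
        = ∑ k : Fin (N - 1), c k * s ^ (k : ℕ) := by
    intro c s
    rw [Polynomial.eval_finset_sum]
    simp
  have hdeg : ∀ c : Fin (N - 1) → ℝ,
      (∑ k : Fin (N - 1), Polynomial.C (c k) * Polynomial.X ^ (k : ℕ)).natDegree < N - 1 := by
    intro c
    have : (∑ k : Fin (N - 1), Polynomial.C (c k) * Polynomial.X ^ (k : ℕ)).natDegree ≤ N - 2 := by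
      apply Polynomial.natDegree_sum_le_of_forall_le
      intro k _
      refine le_trans (Polynomial.natDegree_C_mul_le _ _) ?_
      rw [Polynomial.natDegree_X_pow]
      have := k.isLt; omega
    omega
  have hcoeff : ∀ (c : Fin (N - 1) → ℝ) (j : Fin (N - 1)),
      (∑ k : Fin (N - 1), Polynomial.C (c k) * Polynomial.X ^ (k : ℕ)).coeff (j : ℕ) = c j := by
    intro c j
    rw [Polynomial.finset_sum_coeff, Finset.sum_eq_single j]
    · simp [Polynomial.coeff_C_mul, Polynomial.coeff_X_pow]
    · intro k _ hkj
      have hne : (k : ℕ) ≠ (j : ℕ) := fun h => hkj (Fin.ext h)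
      simp [Polynomial.coeff_C_mul, Polynomial.coeff_X_pow, hne, Ne.symm hne]
    · simp
  -- injectivity of the moment matrix
  have hker : ∀ c : Fin (N - 1) → ℝ, M.mulVec c = 0 → c = 0 := by
    intro c hc
    by_contra hc0
    set pc := ∑ k : Fin (N - 1), Polynomial.C (c k) * Polynomial.X ^ (k : ℕ) with hpc
    have hpne : pc ≠ 0 := by
      intro h
      apply hc0
      funext j
      have h1 := hcoeff c j
      rw [← hpc, h] at h1
      simpa using h1.symm
    have hz : ∀ i : Fin (N - 1), ∫ s in (β (i : ℕ))..(α ((i : ℕ) + 1)),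
        pc.eval s / W s = 0 := by
      intro i
      have h1 := congrFun hc i
      rw [hmul c i] at h1
      simp only [hpc, evalP]
      exact h1
    have h2 := natDegree_ge hab hba hiN hpne hz
    have h3 := hdeg c
    rw [← hpc] at h3
    omega
  have hinj : Function.Injective M.mulVecLin := by
    intro x y hxy
    have h0 : M.mulVec (x - y) = 0 := by
      rw [← Matrix.mulVecLin_apply, map_sub, hxy, sub_self]
    have := hker _ h0
    exact sub_eq_zero.1 this
  have hsurj : Function.Surjective M.mulVecLin :=
    LinearMap.injective_iff_surjective.mp hinj
  obtain ⟨c, hcsol⟩ := hsurj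
    (fun i => -∫ s in (β (i : ℕ))..(α ((i : ℕ) + 1)), s ^ (N - 1) / W s)
  set p : Polynomial ℝ :=
    Polynomial.X ^ (N - 1) + ∑ k : Fin (N - 1), Polynomial.C (c k) * Polynomial.X ^ (k : ℕ)
    with hp
  have hpmonic : p.Monic := by
    apply Polynomial.monic_X_pow_add
    calc (∑ k : Fin (N - 1), Polynomial.C (c k) * Polynomial.X ^ (k : ℕ)).degree
        ≤ ((∑ k : Fin (N - 1), Polynomial.C (c k) * Polynomial.X ^ (k : ℕ)).natDegree : WithBot ℕ) :=
          Polynomial.degree_le_natDegree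
      _ < ((N - 1 : ℕ) : WithBot ℕ) := by exact_mod_cast hdeg c
  have hpdeg : p.natDegree = N - 1 := by
    rw [hp]
    rw [Polynomial.natDegree_add_eq_left_of_natDegree_lt
      (by rw [Polynomial.natDegree_X_pow]; exact hdeg c)]
    exact Polynomial.natDegree_X_pow _
  have hpne0 : p ≠ 0 := hpmonic.ne_zero
  have hpz : ∀ i : Fin (N - 1), ∫ s in (β (i : ℕ))..(α ((i : ℕ) + 1)),
      p.eval s / W s = 0 := by
    intro i
    have h1 := congrFun hcsol i
    rw [Matrix.mulVecLin_apply, hmul c i] at h1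
    have h3 : ∀ s : ℝ, p.eval s = s ^ (N - 1) + ∑ k : Fin (N - 1), c k * s ^ (k : ℕ) := by
      intro s
      rw [hp, Polynomial.eval_add, Polynomial.eval_pow, Polynomial.eval_X, evalP]
    calc ∫ s in (β (i : ℕ))..(α ((i : ℕ) + 1)), p.eval s / W s
        = (∫ s in (β (i : ℕ))..(α ((i : ℕ) + 1)), s ^ (N - 1) / W s)
          + ∫ s in (β (i : ℕ))..(α ((i : ℕ) + 1)),
            (∑ k : Fin (N - 1), c k * s ^ (k : ℕ)) / W s := by
          rw [← intervalIntegral.integral_add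
            (hii i (fun s => s ^ (N - 1)) (continuous_pow _))
            (hii i (fun s => ∑ k : Fin (N - 1), c k * s ^ (k : ℕ))
              (continuous_finset_sum _ fun k _ => continuous_const.mul (continuous_pow _)))]
          apply intervalIntegral.integral_congr
          intro s _
          show Polynomial.eval s p / W s
            = s ^ (N - 1) / W s + (∑ k : Fin (N - 1), c k * s ^ (k : ℕ)) / W s
          rw [h3 s, add_div]
      _ = 0 := by rw [h1]; ring
  have hproot : ∀ i : Fin (N - 1), ∃ x ∈ Ioo (β (i : ℕ)) (α ((i : ℕ) + 1)), p.eval x = 0 :=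
    fun i => exists_root_in_gap hab hba (hiN i) p.continuous (hpz i)
  choose ζ hζ1 hζ2 using hproot
  set q : Polynomial ℝ := ∏ j : Fin (N - 1), (Polynomial.X - Polynomial.C (ζ j)) with hq
  have hqmonic : q.Monic :=
    Polynomial.monic_prod_of_monic _ _ fun j _ => Polynomial.monic_X_sub_C _
  have hqdeg : q.natDegree = N - 1 := by
    rw [hq, Polynomial.natDegree_prod _ _ fun j _ => Polynomial.X_sub_C_ne_zero _]
    simp [Polynomial.natDegree_X_sub_C]
  have hqeval : ∀ (ξ : Fin (N - 1) → ℝ) (s : ℝ),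
      (∏ j : Fin (N - 1), (Polynomial.X - Polynomial.C (ξ j))).eval s
        = ∏ j : Fin (N - 1), (s - ξ j) := by
    intro ξ s
    rw [Polynomial.eval_prod]
    simp
  have hpq : p = q := by
    by_contra hne
    have hDne : p - q ≠ 0 := sub_ne_zero.2 hne
    have hDdeg : (p - q).natDegree < N - 1 :=
      natDegree_sub_lt_monic hpmonic hqmonic hpdeg hqdeg hne
    have hroots : ∀ i : Fin (N - 1), (p - q).IsRoot (ζ i) := by
      intro i
      have hq0 : q.eval (ζ i) = 0 := by
        rw [hq, hqeval]
        exact Finset.prod_eq_zero (Finset.mem_univ i) (by rw [sub_self])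
      simp [Polynomial.IsRoot, Polynomial.eval_sub, hζ2 i, hq0]
    have := card_le_natDegree hab hba hiN hDne ζ fun i => ⟨hζ1 i, hroots i⟩
    omega
  refine ⟨ζ, ⟨hζ1, ?_⟩, ?_⟩
  · intro i
    have heq : (fun s : ℝ => (∏ j : Fin (N - 1), (s - ζ j)) / W s)
        = fun s => p.eval s / W s := by
      funext s
      rw [hpq, hq, hqeval]
    rw [heq]
    exact hpz i
  · rintro ζ' ⟨hmem', hint'⟩
    set q' : Polynomial ℝ := ∏ j : Fin (N - 1), (Polynomial.X - Polynomial.C (ζ' j)) with hq'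
    have hq'monic : q'.Monic :=
      Polynomial.monic_prod_of_monic _ _ fun j _ => Polynomial.monic_X_sub_C _
    have hq'deg : q'.natDegree = N - 1 := by
      rw [hq', Polynomial.natDegree_prod _ _ fun j _ => Polynomial.X_sub_C_ne_zero _]
      simp [Polynomial.natDegree_X_sub_C]
    have hq'z : ∀ i : Fin (N - 1), ∫ s in (β (i : ℕ))..(α ((i : ℕ) + 1)),
        q'.eval s / W s = 0 := by
      intro i
      have heq : (fun s : ℝ => q'.eval s / W s)
          = fun s => (∏ j : Fin (N - 1), (s - ζ' j)) / W s := by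
        funext s
        rw [hq', hqeval]
      rw [heq]
      exact hint' i
    have hqq' : q' = q := by
      by_contra hne
      have hDne : q' - q ≠ 0 := sub_ne_zero.2 hne
      have hDdeg : (q' - q).natDegree < N - 1 :=
        natDegree_sub_lt_monic hq'monic hqmonic hq'deg hqdeg hne
      have hz : ∀ i : Fin (N - 1), ∫ s in (β (i : ℕ))..(α ((i : ℕ) + 1)),
          (q' - q).eval s / W s = 0 := by
        intro i
        have heq : (fun s : ℝ => (q' - q).eval s / W s)
            = fun s => q'.eval s / W s - q.eval s / W s := by
          funext s
          rw [Polynomial.eval_sub, sub_div]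
        rw [heq, intervalIntegral.integral_sub (hii i _ q'.continuous)
          (hii i _ q.continuous), hq'z i]
        have hq0 : ∫ s in (β (i : ℕ))..(α ((i : ℕ) + 1)), q.eval s / W s = 0 := by
          rw [← hpq]
          exact hpz i
        rw [hq0]
        ring
      have := natDegree_ge hab hba hiN hDne hz
      omega
    funext i
    have h0 : (∏ j : Fin (N - 1), (ζ' i - ζ j)) = 0 := by
      have := congrArg (Polynomial.eval (ζ' i)) hqq'
      rw [hq', hq, hqeval, hqeval] at this
      rw [← this]
      exact Finset.prod_eq_zero (Finset.mem_univ i) (by rw [sub_self])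
    obtain ⟨j, _, hj0⟩ := Finset.prod_eq_zero_iff.1 h0
    have hij : ζ' i = ζ j := by linarith
    have hji : i = j := by
      by_contra hne
      rcases lt_trichotomy (i : ℕ) (j : ℕ) with h | h | h
      · have := gap_lt hab hba h (hiN j) (hmem' i) (hζ1 j)
        linarith
      · exact hne (Fin.ext h)
      · have := gap_lt hab hba h (hiN i) (hζ1 j) (hmem' i)
        linarith
    rw [hij, hji]
end

section
/- Let f : ℝ^d → ℝ be continuous and ℤ^d-periodic, let ω, φ ∈ ℝ^d, and let b_j = f(jω + φ). Then for every θ ∈ ℝ the limit C(θ) = lim_{J→∞} (1/J) ∑_{j=1}^{J} e^{−iθj} b_j exists in ℂ. -/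
/-!
Lift `f` to a continuous function on the torus `(ℝ / ℤ)^d`; then `b_j` is `f` sampled along the
linear orbit `jω + φ`. For a character `e_n` of the torus, `e^{-iθj} e_n(jω + φ)` is a geometric
sequence with ratio of modulus one, whose Cesàro means converge. The twisted averages are
continuous linear functionals of norm at most one on `C(T, ℂ)`, so the set of functions along
which they converge is a closed subspace; it contains the characters, hence, by Stone–Weierstrass,
everything.
-/

open Set Filter Topology

theorem Equicontinuous.isClosed_setOf_cauchySeq {X Y : Type*} [TopologicalSpace X]
    [PseudoMetricSpace Y] {F : ℕ → X → Y} (hF : Equicontinuous F) :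
    IsClosed {x | CauchySeq fun n => F n x} := by
  refine isClosed_of_closure_subset fun x hx => Metric.cauchySeq_iff.mpr fun ε hε => ?_
  have hnear := Metric.equicontinuousAt_iff_right.mp (hF x) (ε / 3) (by positivity)
  obtain ⟨y, hxy, hy⟩ := mem_closure_iff_nhds.mp hx _ hnear
  obtain ⟨N, hN⟩ := Metric.cauchySeq_iff.mp hy (ε / 3) (by positivity)
  refine ⟨N, fun m hm n hn => ?_⟩
  calc dist (F m x) (F n x)
      ≤ dist (F m x) (F m y) + dist (F n x) (F n y) + dist (F m y) (F n y) :=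
        dist_triangle4_right _ _ _ _
    _ < ε / 3 + ε / 3 + ε / 3 := add_lt_add (add_lt_add (hxy m) (hxy n)) (hN m hm n hn)
    _ = ε := by ring

section ConvergenceSubmodule

variable {R M E : Type*} [Semiring R] [AddCommMonoid M] [Module R M] [TopologicalSpace E]
  [AddCommMonoid E] [Module R E] [ContinuousAdd E] [ContinuousConstSMul R E]

def LinearMap.convergenceSubmodule (L : ℕ → M →ₗ[R] E) : Submodule R M where
  carrier := {x | ∃ c, Tendsto (fun n => L n x) atTop (𝓝 c)}
  zero_mem' := ⟨0, by simpa using tendsto_const_nhds⟩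
  add_mem' := fun ⟨a, ha⟩ ⟨b, hb⟩ => ⟨a + b, by simpa using ha.add hb⟩
  smul_mem' r _ := fun ⟨a, ha⟩ => ⟨r • a, by simpa using ha.const_smul r⟩

end ConvergenceSubmodule

theorem ContinuousLinearMap.isClosed_convergenceSubmodule {𝕜 E F : Type*}
    [NontriviallyNormedField 𝕜] [SeminormedAddCommGroup E] [NormedSpace 𝕜 E]
    [NormedAddCommGroup F] [NormedSpace 𝕜 F] [CompleteSpace F]
    {L : ℕ → E →L[𝕜] F} {C : ℝ} (hL : ∀ n, ‖L n‖ ≤ C) :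
    IsClosed (LinearMap.convergenceSubmodule fun n => (L n : E →ₗ[𝕜] F) : Set E) := by
  have hcauchy : (LinearMap.convergenceSubmodule fun n => (L n : E →ₗ[𝕜] F) : Set E)
      = {x | CauchySeq fun n => L n x} :=
    Set.ext fun x => ⟨fun ⟨_, hc⟩ => hc.cauchySeq, cauchySeq_tendsto_of_complete⟩
  rw [hcauchy]
  have hequi : Equicontinuous fun n => (L n : E → F) :=
    (NormedSpace.equicontinuous_TFAE L).out 5 1 |>.mp (⟨C, hL⟩ : ∃ C, ∀ n, ‖L n‖ ≤ C)
  exact hequi.isClosed_setOf_cauchySeq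

theorem exists_tendsto_cesaro_pow {z : ℂ} (hz : ‖z‖ ≤ 1) :
    ∃ c, Tendsto (fun J : ℕ => (J : ℂ)⁻¹ * ∑ j ∈ Finset.Icc 1 J, z ^ j) atTop (𝓝 c) := by
  rcases eq_or_ne z 1 with rfl | hz1
  · refine ⟨1, tendsto_const_nhds.congr' ?_⟩
    filter_upwards [eventually_ne_atTop 0] with J hJ
    simp [hJ]
  refine ⟨0, squeeze_zero_norm (a := fun J : ℕ => 2 / ‖z - 1‖ / J) (fun J => ?_)
    (tendsto_const_div_atTop_nhds_zero_nat _)⟩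
  have hsum : ∑ j ∈ Finset.Icc 1 J, z ^ j = (z ^ (J + 1) - z) / (z - 1) := by
    rw [eq_div_iff (sub_ne_zero.mpr hz1), ← Finset.Ico_add_one_right_eq_Icc,
      geom_sum_Ico_mul _ (by omega), pow_one]
  have hnum : ‖z ^ (J + 1) - z‖ ≤ 2 := calc
    ‖z ^ (J + 1) - z‖ ≤ ‖z‖ ^ (J + 1) + ‖z‖ := by
      simpa [norm_pow] using norm_sub_le (z ^ (J + 1)) z
    _ ≤ 1 + 1 := by gcongr; exact pow_le_one₀ (norm_nonneg z) hz
    _ = 2 := by norm_num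
  rw [hsum, norm_mul, norm_inv, Complex.norm_natCast, norm_div, div_eq_inv_mul _ (J : ℝ)]
  gcongr

section TwistedAverage

variable {T : Type*} [TopologicalSpace T]

noncomputable def twistedAverage (θ : ℝ) (x : ℕ → T) (J : ℕ) : C(T, ℂ) →L[ℂ] ℂ :=
  (J : ℂ)⁻¹ • ∑ j ∈ Finset.Icc 1 J,
    Complex.exp (-(Complex.I * θ * j)) • ContinuousMap.evalCLM ℂ (x j)

theorem twistedAverage_apply (θ : ℝ) (x : ℕ → T) (J : ℕ) (g : C(T, ℂ)) :
    twistedAverage θ x J g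
      = (J : ℂ)⁻¹ * ∑ j ∈ Finset.Icc 1 J, Complex.exp (-(Complex.I * θ * j)) * g (x j) := by
  simp [twistedAverage]

theorem norm_twistedAverage_le [CompactSpace T] (θ : ℝ) (x : ℕ → T) (J : ℕ) :
    ‖twistedAverage θ x J‖ ≤ 1 := by
  refine ContinuousLinearMap.opNorm_le_bound _ zero_le_one fun g => ?_
  have hterm (j : ℕ) : ‖Complex.exp (-(Complex.I * θ * j)) * g (x j)‖ ≤ ‖g‖ := by
    rw [norm_mul, Complex.norm_exp]
    simpa using g.norm_coe_le_norm (x j)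
  rw [twistedAverage_apply, norm_mul, norm_inv, Complex.norm_natCast, one_mul]
  calc (J : ℝ)⁻¹ * ‖∑ j ∈ Finset.Icc 1 J, Complex.exp (-(Complex.I * θ * j)) * g (x j)‖
      ≤ (J : ℝ)⁻¹ * (J * ‖g‖) := by
        gcongr
        simpa using norm_sum_le_of_le (Finset.Icc 1 J) fun j _ => hterm j
    _ ≤ ‖g‖ := by
        rcases J.eq_zero_or_pos with rfl | hJ
        · simp
        · rw [inv_mul_cancel_left₀ (by positivity)]

end TwistedAverage

open Real

namespace UnitAddTorus

variable {ι : Type*}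

def mk : (ι → ℝ) → UnitAddTorus ι := Pi.map fun _ => ((↑) : ℝ → UnitAddCircle)

theorem isOpenQuotientMap_mk : IsOpenQuotientMap (mk : (ι → ℝ) → UnitAddTorus ι) :=
  IsOpenQuotientMap.piMap fun _ => QuotientAddGroup.isOpenQuotientMap_mk

theorem exists_intCast_add_of_mk_eq_mk {x y : ι → ℝ} (h : mk x = mk y) :
    ∃ m : ι → ℤ, y = x + fun i => (m i : ℝ) := by
  have hcoord (i : ι) : ∃ m : ℤ, (m : ℝ) = y i - x i := by
    have hi : ((y i - x i : ℝ) : UnitAddCircle) = 0 := by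
      rw [AddCircle.coe_sub, sub_eq_zero]; exact (congr_fun h i).symm
    simpa using (AddCircle.coe_eq_zero_iff 1).mp hi
  choose m hm using hcoord
  exact ⟨m, funext fun i => by simp [hm]⟩

theorem exists_continuousMap_comp_mk {α : Type*} [TopologicalSpace α] {f : (ι → ℝ) → α}
    (hf : Continuous f) (hper : ∀ (x : ι → ℝ) (m : ι → ℤ), f (x + fun i => (m i : ℝ)) = f x) :
    ∃ F : C(UnitAddTorus ι, α), ∀ x, F (mk x) = f x := by
  let q : C(ι → ℝ, UnitAddTorus ι) := ⟨mk, isOpenQuotientMap_mk.continuous⟩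
  have hq : IsQuotientMap q := isOpenQuotientMap_mk.isQuotientMap
  have hfactor : Function.FactorsThrough (⟨f, hf⟩ : C(ι → ℝ, α)) q := fun x y h => by
    obtain ⟨m, rfl⟩ := exists_intCast_add_of_mk_eq_mk h
    exact (hper x m).symm
  exact ⟨hq.lift ⟨f, hf⟩ hfactor, DFunLike.congr_fun (hq.lift_comp ⟨f, hf⟩ hfactor)⟩

theorem mFourier_mk [Fintype ι] (n : ι → ℤ) (x : ι → ℝ) :
    mFourier n (mk x) = Complex.exp (2 * π * Complex.I * ∑ i, (n i : ℂ) * x i) := by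
  simp only [mFourier, ContinuousMap.coe_mk, mk, Pi.map_apply, fourier_coe_apply,
    Complex.ofReal_one, div_one, ← Complex.exp_sum, Finset.mul_sum, mul_assoc]

theorem twistedAverage_mFourier_mk [Fintype ι] (θ : ℝ) (n : ι → ℤ) (ω φ : ι → ℝ) (J : ℕ) :
    twistedAverage θ (fun j : ℕ => mk ((j : ℝ) • ω + φ)) J (mFourier n)
      = mFourier n (mk φ) * ((J : ℂ)⁻¹ * ∑ j ∈ Finset.Icc 1 J,
          Complex.exp ((2 * π * ∑ i, (n i : ℝ) * ω i - θ : ℝ) * Complex.I) ^ j) := by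
  rw [twistedAverage_apply, mul_left_comm (mFourier n (mk φ)),
    Finset.mul_sum _ _ (mFourier n (mk φ))]
  refine congrArg _ (Finset.sum_congr rfl fun j _ => ?_)
  simp only [mFourier_mk, ← Complex.exp_nat_mul, ← Complex.exp_add]
  congr 1
  have hsum : ∑ i, (n i : ℂ) * (((j : ℝ) • ω + φ) i : ℝ)
      = j * ∑ i, (n i : ℂ) * ω i + ∑ i, (n i : ℂ) * φ i := by
    simp only [Pi.add_apply, Pi.smul_apply, smul_eq_mul, Complex.ofReal_add, Complex.ofReal_mul,
      Complex.ofReal_natCast, Finset.mul_sum, ← Finset.sum_add_distrib]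
    exact Finset.sum_congr rfl fun i _ => by ring
  rw [hsum]
  push_cast
  ring

theorem exists_tendsto_twistedAverage_mk [Fintype ι] (θ : ℝ) (ω φ : ι → ℝ)
    (g : C(UnitAddTorus ι, ℂ)) :
    ∃ c, Tendsto (fun J => twistedAverage θ (fun j : ℕ => mk ((j : ℝ) • ω + φ)) J g)
      atTop (𝓝 c) := by
  set S := LinearMap.convergenceSubmodule fun J =>
    (twistedAverage θ (fun j : ℕ => mk ((j : ℝ) • ω + φ)) J : C(UnitAddTorus ι, ℂ) →ₗ[ℂ] ℂ)
  have hmFourier : Submodule.span ℂ (range mFourier) ≤ S := by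
    refine Submodule.span_le.mpr ?_
    rintro _ ⟨n, rfl⟩
    obtain ⟨c, hc⟩ := exists_tendsto_cesaro_pow (Complex.norm_exp_ofReal_mul_I _).le
    exact ⟨_, (hc.const_mul (mFourier n (mk φ))).congr fun J =>
      (twistedAverage_mFourier_mk θ n ω φ J).symm⟩
  have hS : S = ⊤ := by
    rw [eq_top_iff, ← span_mFourier_closure_eq_top]
    exact Submodule.topologicalClosure_minimal _ hmFourier
      (ContinuousLinearMap.isClosed_convergenceSubmodule (norm_twistedAverage_le θ _))
  exact (hS ▸ Submodule.mem_top : g ∈ S)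

end UnitAddTorus

theorem stmt_13_general (d : ℕ) (f : (Fin d → ℝ) → ℝ) (hf : Continuous f)
    (hper : ∀ (x : Fin d → ℝ) (m : Fin d → ℤ), f (x + fun i => (m i : ℝ)) = f x)
    (ω φ : Fin d → ℝ) (θ : ℝ) :
    ∃ c : ℂ, Tendsto
      (fun J : ℕ => (J : ℂ)⁻¹ * ∑ j ∈ Finset.Icc 1 J,
        Complex.exp (-(Complex.I * (θ : ℂ) * (j : ℂ))) * ((f ((j : ℝ) • ω + φ) : ℝ) : ℂ))
      atTop (nhds c) := by
  obtain ⟨F, hF⟩ := UnitAddTorus.exists_continuousMap_comp_mk (f := fun x => (f x : ℂ))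
    (by fun_prop) fun x m => by rw [hper]
  obtain ⟨c, hc⟩ := UnitAddTorus.exists_tendsto_twistedAverage_mk θ ω φ F
  exact ⟨c, by simpa only [twistedAverage_apply, hF] using hc⟩

/-- Let `f : ℝ^d → ℝ` be continuous and `ℤ^d`-periodic, `ω φ ∈ ℝ^d`,
and `b j = f (j • ω + φ)`. Then for every `θ ∈ ℝ` the almost-periodic Fourier
coefficient `C(θ) = lim_{J→∞} (1/J) ∑_{j=1}^J e^{−iθj} b j` exists in ℂ. -/
theorem stmt_13 (d : ℕ) (hd : 1 ≤ d) (f : (Fin d → ℝ) → ℝ) (hf : Continuous f)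
    (hper : ∀ (x : Fin d → ℝ) (m : Fin d → ℤ), f (x + fun i => (m i : ℝ)) = f x)
    (ω φ : Fin d → ℝ) (θ : ℝ) :
    ∃ c : ℂ, Tendsto
      (fun J : ℕ => (J : ℂ)⁻¹ * ∑ j ∈ Finset.Icc 1 J,
        Complex.exp (-(Complex.I * (θ : ℂ) * (j : ℂ))) * ((f ((j : ℝ) • ω + φ) : ℝ) : ℂ))
      atTop (nhds c) :=
  stmt_13_general d f hf hper ω φ θ
end

section
/- For a fully disconnected affine IFS on ℝ with attractor A, define H^1 = E^0 ∖ Φ(E^0) and H^n = Φ(H^{n−1}) for n ≥ 2. Then the complement of the attractor within its convex hull is the countable disjoint union of all gaps: E^0 ∖ A = ⋃_{n=1}^∞ H^n. -/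
open Set Function Metric Bornology
open scoped NNReal

/-!
Both the iterates `Φⁿ(E⁰)` and the attractor are controlled by one contraction estimate:
if `Φ K ⊆ K` and every map is `r`-Lipschitz, then the points of `Φⁿ(B)` lie within `rⁿ · C`
of `K`. With `K = E⁰` it gives `A ⊆ E⁰`, and with `K = A` it gives `⋂ₙ Φⁿ(E⁰) ⊆ A`, so
`A = ⋂ₙ Φⁿ(E⁰)`. Since the maps are injective with disjoint images of `E⁰`, `Φ` commutes
with differences of subsets of `E⁰`, whence `Hⁿ⁺¹ = Φⁿ(E⁰) \ Φⁿ⁺¹(E⁰)`: the gaps are the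
successive differences of a decreasing sequence of sets with intersection `A`.
-/

def hutchinson {α ι : Type*} (f : ι → α → α) (B : Set α) : Set α :=
  ⋃ i, f i '' B

theorem Antitone.pairwise_disjoint_sdiff_succ {α : Type*} {s : ℕ → Set α} (hs : Antitone s) :
    Pairwise (Disjoint on fun n => s n \ s (n + 1)) :=
  (pairwise_disjoint_on _).2 fun _ _ hmn =>
    disjoint_sdiff_left.mono_right (sdiff_subset.trans (hs hmn))

theorem Antitone.iUnion_sdiff_succ {α : Type*} {s : ℕ → Set α} (hs : Antitone s) :
    ⋃ n, (s n \ s (n + 1)) = s 0 \ ⋂ n, s n := by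
  refine subset_antisymm (iUnion_subset fun n x hx => ⟨hs (Nat.zero_le n) hx.1,
    fun hx' => hx.2 (mem_iInter.1 hx' _)⟩) ?_
  rintro x ⟨hx0, hx⟩
  obtain ⟨n, hn⟩ : ∃ n, x ∉ s n := by simpa using hx
  induction n with
  | zero => exact absurd hx0 hn
  | succ n ih =>
    by_cases h : x ∈ s n
    exacts [mem_iUnion.2 ⟨n, h, hn⟩, ih h]

section Hutchinson

variable {α ι : Type*} (f : ι → α → α)

theorem hutchinson_mono : Monotone (hutchinson f) :=
  fun _ _ h => iUnion_mono fun _ => image_mono h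

theorem hutchinson_subset_of_mapsTo {E : Set α} (h : ∀ i, MapsTo (f i) E E) :
    hutchinson f E ⊆ E :=
  iUnion_subset fun i => (h i).image_subset

variable {f}

theorem hutchinson_sdiff {E X Y : Set α} (hinj : ∀ i, InjOn (f i) E)
    (hdisj : Pairwise (Disjoint on fun i => f i '' E)) (hX : X ⊆ E) (hY : Y ⊆ E) :
    hutchinson f (X \ Y) = hutchinson f X \ hutchinson f Y := by
  ext x
  simp only [hutchinson, mem_iUnion, mem_sdiff, mem_image]
  constructor
  · rintro ⟨j, s, ⟨hsX, hsY⟩, rfl⟩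
    refine ⟨⟨j, s, hsX, rfl⟩, ?_⟩
    rintro ⟨i, t, htY, hts⟩
    obtain rfl | hij := eq_or_ne i j
    · exact hsY (hinj i (hY htY) (hX hsX) hts ▸ htY)
    · exact disjoint_left.1 (hdisj hij) ⟨t, hY htY, hts⟩ ⟨s, hX hsX, rfl⟩
  · rintro ⟨⟨j, s, hsX, rfl⟩, hnot⟩
    exact ⟨j, s, ⟨hsX, fun hsY => hnot ⟨j, s, hsY, rfl⟩⟩, rfl⟩

theorem gap_eq_iterate_sdiff {E : Set α} {H : ℕ → Set α} (hE : hutchinson f E ⊆ E)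
    (hinj : ∀ i, InjOn (f i) E) (hdisj : Pairwise (Disjoint on fun i => f i '' E))
    (hH1 : H 1 = E \ hutchinson f E) (hHrec : ∀ n, 2 ≤ n → H n = hutchinson f (H (n - 1)))
    (n : ℕ) : H (n + 1) = (hutchinson f)^[n] E \ (hutchinson f)^[n + 1] E := by
  have hsub : ∀ n, (hutchinson f)^[n] E ⊆ E :=
    fun n => (hutchinson_mono f).antitone_iterate_of_map_le hE (Nat.zero_le n)
  induction n with
  | zero => simpa using hH1
  | succ n ih =>
    rw [hHrec (n + 2) (by omega), show n + 2 - 1 = n + 1 by omega, ih,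
      hutchinson_sdiff hinj hdisj (hsub n) (hsub (n + 1)),
      ← iterate_succ_apply' (hutchinson f) n, ← iterate_succ_apply' (hutchinson f) (n + 1)]

end Hutchinson

section Contraction

variable {α ι : Type*} [MetricSpace α] {f : ι → α → α} {r : ℝ≥0}

theorem infDist_apply_le_of_lipschitzWith {g : α → α} (hg : LipschitzWith r g) {K : Set α}
    (hK : g '' K ⊆ K) (hKne : K.Nonempty) (x : α) : infDist (g x) K ≤ r * infDist x K := by
  have : Nonempty K := hKne.to_subtype
  calc infDist (g x) K ≤ ⨅ y : K, r * dist x y :=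
        le_ciInf fun y => (infDist_le_dist_of_mem (hK (mem_image_of_mem g y.2))).trans
          (hg.dist_le_mul x y)
    _ = r * infDist x K := by rw [infDist_eq_iInf, Real.mul_iInf_of_nonneg r.coe_nonneg]

theorem infDist_le_of_mem_iterate_hutchinson (hf : ∀ i, LipschitzWith r (f i)) {K B : Set α}
    (hK : hutchinson f K ⊆ K) (hKne : K.Nonempty) {C : ℝ}
    (hB : ∀ y ∈ B, infDist y K ≤ C) :
    ∀ n, ∀ x ∈ (hutchinson f)^[n] B, infDist x K ≤ r ^ n * C := by
  intro n
  induction n with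
  | zero => simpa using hB
  | succ n ih =>
    intro x hx
    rw [iterate_succ_apply'] at hx
    obtain ⟨i, y, hy, rfl⟩ := mem_iUnion.1 hx
    calc infDist (f i y) K ≤ r * infDist y K :=
          infDist_apply_le_of_lipschitzWith (hf i) ((subset_iUnion _ i).trans hK) hKne y
      _ ≤ r * (r ^ n * C) := mul_le_mul_of_nonneg_left (ih y hy) r.coe_nonneg
      _ = r ^ (n + 1) * C := by ring

theorem iInter_iterate_hutchinson_subset (hr : r < 1) (hf : ∀ i, LipschitzWith r (f i))
    {K B : Set α} (hK : hutchinson f K ⊆ K) (hKc : IsClosed K) (hKne : K.Nonempty)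
    (hB : IsBounded B) : ⋂ n, (hutchinson f)^[n] B ⊆ K := by
  obtain ⟨k, hk⟩ := hKne
  obtain ⟨C, hC⟩ := hB.subset_closedBall k
  have hBC : ∀ y ∈ B, infDist y K ≤ C :=
    fun y hy => (infDist_le_dist_of_mem hk).trans (mem_closedBall.1 (hC hy))
  intro x hx
  have hle : ∀ n : ℕ, infDist x K ≤ r ^ n * C := fun n =>
    infDist_le_of_mem_iterate_hutchinson hf hK ⟨k, hk⟩ hBC n x (mem_iInter.1 hx n)
  have hlim : Filter.Tendsto (fun n : ℕ => (r : ℝ) ^ n * C) Filter.atTop (nhds 0) := by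
    simpa using (tendsto_pow_atTop_nhds_zero_of_lt_one r.coe_nonneg hr).mul_const C
  exact (hKc.mem_iff_infDist_zero ⟨k, hk⟩).2
    (le_antisymm (ge_of_tendsto' hlim hle) infDist_nonneg)

theorem eq_iInter_iterate_hutchinson (hr : r < 1) (hf : ∀ i, LipschitzWith r (f i))
    {A E : Set α} (hA : hutchinson f A = A) (hAc : IsClosed A) (hAne : A.Nonempty)
    (hAb : IsBounded A) (hE : hutchinson f E ⊆ E) (hEc : IsClosed E) (hEne : E.Nonempty)
    (hEb : IsBounded E) : A = ⋂ n, (hutchinson f)^[n] E := by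
  have hAE : A ⊆ E := fun x hx => iInter_iterate_hutchinson_subset hr hf hE hEc hEne hAb
    (mem_iInter.2 fun n => by rwa [iterate_fixed hA])
  refine subset_antisymm (subset_iInter fun n => ?_)
    (iInter_iterate_hutchinson_subset hr hf hA.subset hAc hAne hEb)
  calc A = (hutchinson f)^[n] A := (iterate_fixed hA n).symm
    _ ⊆ (hutchinson f)^[n] E := (hutchinson_mono f).iterate n hAE

end Contraction

section Affine

variable {δ c : ℝ}

theorem lipschitzWith_mul_sub_add {r : ℝ≥0} (h : |δ| ≤ r) :
    LipschitzWith r fun s => δ * (s - c) + c :=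
  LipschitzWith.of_dist_le_mul fun s t => by
    rw [Real.dist_eq, Real.dist_eq,
      show δ * (s - c) + c - (δ * (t - c) + c) = δ * (s - t) by ring, abs_mul]
    exact mul_le_mul_of_nonneg_right h (abs_nonneg _)

theorem mul_sub_add_injective (hδ : δ ≠ 0) : Function.Injective fun s => δ * (s - c) + c :=
  fun s t h => by simpa [hδ] using h

theorem mapsTo_mul_sub_add_Icc {a b : ℝ} (hδ : δ ∈ Icc 0 1) (hc : c ∈ Icc a b) :
    MapsTo (fun s => δ * (s - c) + c) (Icc a b) (Icc a b) :=
  fun s hs => by simpa [add_comm] using (convex_Icc a b).add_smul_sub_mem hc hs hδ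

end Affine

theorem stmt_19_general (M : ℕ) (δ γ : Fin M → ℝ)
    (hδ0 : ∀ j, 0 < δ j) (hδ1 : ∀ j, δ j < 1)
    (hdisj : ∀ i j : Fin M, i ≠ j →
      Disjoint ((fun s => δ i * (s - γ i) + γ i) '' Set.Icc (⨅ j, γ j) (⨆ j, γ j))
               ((fun s => δ j * (s - γ j) + γ j) '' Set.Icc (⨅ j, γ j) (⨆ j, γ j)))
    (A : Set ℝ) (hAne : A.Nonempty) (hAc : IsCompact A)
    (hAfix : A = ⋃ j : Fin M, (fun s => δ j * (s - γ j) + γ j) '' A)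
    (H : ℕ → Set ℝ)
    (hH1 : H 1 = Set.Icc (⨅ j, γ j) (⨆ j, γ j) \
      (⋃ j : Fin M, (fun s => δ j * (s - γ j) + γ j) '' Set.Icc (⨅ j, γ j) (⨆ j, γ j)))
    (hHrec : ∀ n, 2 ≤ n →
      H n = ⋃ j : Fin M, (fun s => δ j * (s - γ j) + γ j) '' H (n - 1)) :
    (∀ m n, 1 ≤ m → 1 ≤ n → m ≠ n → Disjoint (H m) (H n)) ∧
    Set.Icc (⨅ j, γ j) (⨆ j, γ j) \ A = ⋃ n : ℕ, H (n + 1) := by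
  set φ : Fin M → ℝ → ℝ := fun j s => δ j * (s - γ j) + γ j
  set E := Icc (⨅ j, γ j) (⨆ j, γ j)
  change A = hutchinson φ A at hAfix
  have : Nonempty (Fin M) := by
    obtain ⟨a, ha⟩ := hAne
    rw [hAfix] at ha
    obtain ⟨j, -⟩ := mem_iUnion.1 ha
    exact ⟨j⟩
  have hγE : ∀ j, γ j ∈ E := fun j =>
    ⟨ciInf_le (finite_range γ).bddBelow j, le_ciSup (finite_range γ).bddAbove j⟩
  have hE : hutchinson φ E ⊆ E := hutchinson_subset_of_mapsTo φ fun j =>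
    mapsTo_mul_sub_add_Icc ⟨(hδ0 j).le, (hδ1 j).le⟩ (hγE j)
  obtain ⟨j₀, hj₀⟩ := Finite.exists_max δ
  have hφ : ∀ j, LipschitzWith ⟨δ j₀, (hδ0 j₀).le⟩ (φ j) := fun j =>
    lipschitzWith_mul_sub_add ((abs_of_pos (hδ0 j)).trans_le (hj₀ j))
  have hA : A = ⋂ n, (hutchinson φ)^[n] E :=
    eq_iInter_iterate_hutchinson (hδ1 j₀) hφ hAfix.symm hAc.isClosed hAne hAc.isBounded hE
      isClosed_Icc ⟨γ j₀, hγE j₀⟩ (isBounded_Icc _ _)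
  have hgap := gap_eq_iterate_sdiff hE (fun j => (mul_sub_add_injective (hδ0 j).ne').injOn)
    hdisj hH1 hHrec
  have hanti := (hutchinson_mono φ).antitone_iterate_of_map_le hE
  refine ⟨fun m n hm hn hmn => ?_, ?_⟩
  · obtain ⟨m, rfl⟩ := Nat.exists_eq_add_of_le' hm
    obtain ⟨n, rfl⟩ := Nat.exists_eq_add_of_le' hn
    rw [hgap, hgap]
    exact hanti.pairwise_disjoint_sdiff_succ (by omega)
  · simp_rw [hgap, hanti.iUnion_sdiff_succ, hA]
    rfl

/-- For a fully disconnected affine IFS on ℝ with attractor `A`,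
with gap sets `H 1 = E⁰ \ Φ(E⁰)` and `H n = Φ(H (n-1))` for `n ≥ 2`, the complement of
the attractor within its convex hull is the countable disjoint union of all gaps:
`E⁰ \ A = ⋃_{n≥1} H n`. -/
theorem stmt_19 (M : ℕ) (hM : 2 ≤ M) (δ γ : Fin M → ℝ)
    (hδ0 : ∀ j, 0 < δ j) (hδ1 : ∀ j, δ j < 1) (hγ : Function.Injective γ)
    (hdisj : ∀ i j : Fin M, i ≠ j →
      Disjoint ((fun s => δ i * (s - γ i) + γ i) '' Set.Icc (⨅ j, γ j) (⨆ j, γ j))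
               ((fun s => δ j * (s - γ j) + γ j) '' Set.Icc (⨅ j, γ j) (⨆ j, γ j)))
    (A : Set ℝ) (hAne : A.Nonempty) (hAc : IsCompact A)
    (hAfix : A = ⋃ j : Fin M, (fun s => δ j * (s - γ j) + γ j) '' A)
    (H : ℕ → Set ℝ)
    (hH1 : H 1 = Set.Icc (⨅ j, γ j) (⨆ j, γ j) \
      (⋃ j : Fin M, (fun s => δ j * (s - γ j) + γ j) '' Set.Icc (⨅ j, γ j) (⨆ j, γ j)))
    (hHrec : ∀ n, 2 ≤ n →
      H n = ⋃ j : Fin M, (fun s => δ j * (s - γ j) + γ j) '' H (n - 1)) :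
    (∀ m n, 1 ≤ m → 1 ≤ n → m ≠ n → Disjoint (H m) (H n)) ∧
    Set.Icc (⨅ j, γ j) (⨆ j, γ j) \ A = ⋃ n : ℕ, H (n + 1) :=
  stmt_19_general M δ γ hδ0 hδ1 hdisj A hAne hAc hAfix H hH1 hHrec
end
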